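/- arXiv:1308.6606 — 2 statements merged into one kernel-verified Lean document; each statement's English description precedes it below -/
import Mathlib

section
/- Let (a_n)_{n≥1} be a sequence in the class A_ST satisfying Assumption A2, and let A > 1 be fixed. Then there is a constant K (depending on A and the sequence) such that for all y ≥ 2, ∑_{p prime, p ≥ y, |a_p| < (log₂ p)^{−A}} 1/p ≤ K·(log₂ y)^{−(A−1)}. -/
open Filter Finset MeasureTheory Asymptotics
open scoped Classical

noncomputable section

/-- `log₁ x = max (log x) 1`, and `logₖ x = log₁ (log_{k-1} x)` (iterated logarithm). -/
def log1 (x : ℝ) : ℝ := max (Real.log x) 1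
def log2 (x : ℝ) : ℝ := log1 (log1 x)
def log3 (x : ℝ) : ℝ := log1 (log2 x)
def log4 (x : ℝ) : ℝ := log1 (log3 x)

/-- The finite set of primes `p ≤ x`. -/
def primesUpTo (x : ℝ) : Finset ℕ := (Finset.range (⌊x⌋₊ + 1)).filter Nat.Prime

/-- The Sato–Tate angle `θ_p ∈ [0, π]` defined by `a p = 2 cos θ_p`. -/
def thetaOf (a : ℕ → ℝ) (p : ℕ) : ℝ := Real.arccos (a p / 2)

/-- The class `A_ST`: multiplicativity, Sato–Tate distribution of the angles at primes,
and growth bound at prime powers. -/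
def IsAST (a : ℕ → ℝ) : Prop :=
  (∀ m n : ℕ, 0 < m → 0 < n → Nat.Coprime m n → a (m * n) = a m * a n) ∧
  (∀ p : ℕ, p.Prime → a p ∈ Set.Icc (-2 : ℝ) 2) ∧
  (∀ α : ℝ, 0 ≤ α → α < Real.pi →
    Tendsto (fun x : ℝ =>
        (((primesUpTo x).filter (fun p => thetaOf a p ∈ Set.Icc 0 α)).card : ℝ) /
          ((primesUpTo x).card : ℝ))
      atTop (nhds ((2 / Real.pi) * ∫ θ in (0:ℝ)..α, Real.sin θ ^ 2))) ∧
  (∃ ϱ : ℝ, 0 < ϱ ∧ ∀ p k : ℕ, p.Prime → 2 ≤ k →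
    |a (p ^ k)| ≤ (p : ℝ) ^ (((k : ℝ) - 1) / 2 - ϱ))

/-- Assumption A1: `|a_{p^k}| ≥ c₀ p^{-Ck}` whenever `a_p ≠ 0`. -/
def A1 (a : ℕ → ℝ) : Prop :=
  ∃ C : ℝ, 0 < C ∧ ∃ c₀ : ℝ, 0 < c₀ ∧ ∀ p k : ℕ, p.Prime → a p ≠ 0 → 1 ≤ k →
    c₀ * (p : ℝ) ^ (-(C * k)) ≤ |a (p ^ k)|

/-- Assumption A2: effective Sato–Tate with error `O((log₂ x)^{-A})` for every `A > 0`. -/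
def A2 (a : ℕ → ℝ) : Prop :=
  ∀ A : ℝ, 0 < A → ∃ K : ℝ, ∀ α β x : ℝ, 0 ≤ α → α ≤ β → β ≤ Real.pi → 3 ≤ x →
    |(((primesUpTo x).filter (fun p => thetaOf a p ∈ Set.Icc α β)).card : ℝ) /
        ((primesUpTo x).card : ℝ) -
      (2 / Real.pi) * ∫ θ in α..β, Real.sin θ ^ 2| ≤ K * (log2 x) ^ (-A)

/-- `N(x) = {n ≤ x : a_n ≠ 0}`. -/
def NN (a : ℕ → ℝ) (x : ℝ) : Finset ℕ := (Finset.Icc 1 ⌊x⌋₊).filter (fun n => a n ≠ 0)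

/-- `N_A(x)`: members of `N(x)` all of whose prime divisors `p` satisfy
`|a_p| > (log₂ x)^{-A}`. -/
def NA (a : ℕ → ℝ) (A x : ℝ) : Finset ℕ :=
  (NN a x).filter (fun n => ∀ p : ℕ, p.Prime → p ∣ n → (log2 x) ^ (-A) < |a p|)

/-- The strongly multiplicative function `h` with `h(p^k) = a_p`. -/
def hmul (a : ℕ → ℝ) (n : ℕ) : ℝ := ∏ p ∈ n.primeFactors, a p

end


section AuxST

lemma aux_log1_ge_one (x : ℝ) : 1 ≤ log1 x := le_max_right _ _

lemma aux_log1_pos (x : ℝ) : 0 < log1 x := lt_of_lt_of_le one_pos (aux_log1_ge_one x)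

lemma aux_log1_mono {x y : ℝ} (hx : 0 ≤ x) (h : x ≤ y) : log1 x ≤ log1 y := by
  rcases le_or_gt x 1 with h1 | h1
  · have : log1 x = 1 := max_eq_right ((Real.log_nonpos hx h1).trans zero_le_one)
    rw [this]; exact aux_log1_ge_one y
  · exact max_le_max (Real.log_le_log (lt_trans one_pos h1) h) le_rfl

lemma aux_log1_of_one_le {x : ℝ} (h : 1 ≤ Real.log x) : log1 x = Real.log x :=
  max_eq_left h

lemma aux_arcsin_le {t : ℝ} (h0 : 0 ≤ t) (h1 : t ≤ 1/2) : Real.arcsin t ≤ 2 * t := by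
  rcases eq_or_lt_of_le h0 with h | h
  · simp [← h]
  · have hpi := Real.two_le_pi
    have h2 : (2*t) ∈ Set.Icc (-(Real.pi/2)) (Real.pi/2) := by
      constructor
      · have : (0:ℝ) < Real.pi/2 := by linarith
        linarith
      · linarith
    rw [Real.arcsin_le_iff_le_sin ⟨by linarith, by linarith⟩ h2]
    have hs := Real.sin_gt_sub_cube (by linarith : (0:ℝ) < 2*t)
    have ht2 : t^2 ≤ 1/4 := by nlinarith
    have h3 : 2*t^3 ≤ t/2 := by nlinarith [mul_le_mul_of_nonneg_left ht2 (le_of_lt h)]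
    nlinarith [hs, h3]

end AuxST

section AuxST2

lemma aux_anti_arccos {u v : ℝ} (h : u ≤ v) : Real.arccos v ≤ Real.arccos u := by
  simp only [Real.arccos_eq_pi_div_two_sub_arcsin]
  exact sub_le_sub_left (Real.monotone_arcsin h) _

open scoped Classical in
lemma aux_count (a : ℕ → ℝ) (hbd : ∀ p : ℕ, p.Prime → a p ∈ Set.Icc (-2:ℝ) 2)
    (A K₀ : ℝ)
    (hK : ∀ α β x : ℝ, 0 ≤ α → α ≤ β → β ≤ Real.pi → 3 ≤ x →
      |(((primesUpTo x).filter (fun p => thetaOf a p ∈ Set.Icc α β)).card : ℝ) /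
        ((primesUpTo x).card : ℝ) -
        (2 / Real.pi) * ∫ θ in α..β, Real.sin θ ^ 2| ≤ K₀ * (log2 x) ^ (-A))
    {ε x : ℝ} (hε0 : 0 < ε) (hε1 : ε ≤ 1) (hx : 3 ≤ x) :
    (((primesUpTo x).filter (fun p => |a p| < ε)).card : ℝ) ≤
      ((primesUpTo x).card : ℝ) * (2 * ε + K₀ * (log2 x) ^ (-A)) := by
  have hπ := Real.pi_pos
  set α := Real.arccos (ε/2) with hα
  set β := Real.pi - α with hβ
  have h0α : 0 ≤ α := Real.arccos_nonneg _
  have hαhalf : α ≤ Real.pi/2 := Real.arccos_le_pi_div_two.2 (by linarith)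
  have hαβ : α ≤ β := by linarith
  have hβπ : β ≤ Real.pi := by linarith
  have hsub : (primesUpTo x).filter (fun p => |a p| < ε) ⊆
      (primesUpTo x).filter (fun p => thetaOf a p ∈ Set.Icc α β) := by
    intro p hp
    rw [Finset.mem_filter] at hp ⊢
    refine ⟨hp.1, ?_, ?_⟩
    · have h2 : a p / 2 ≤ ε/2 := by have := (abs_lt.mp hp.2).2; linarith
      exact aux_anti_arccos h2
    · have h1 : -(ε/2) ≤ a p / 2 := by have := (abs_lt.mp hp.2).1; linarith
      have := aux_anti_arccos h1
      rw [Real.arccos_neg] at this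
      exact this
  have hcard : (((primesUpTo x).filter (fun p => |a p| < ε)).card : ℝ) ≤
      (((primesUpTo x).filter (fun p => thetaOf a p ∈ Set.Icc α β)).card : ℝ) := by
    exact_mod_cast Finset.card_le_card hsub
  rcases Nat.eq_zero_or_pos (primesUpTo x).card with hP | hP
  · have hPe : primesUpTo x = ∅ := Finset.card_eq_zero.mp hP
    simp [hPe]
  · have hPpos : (0:ℝ) < ((primesUpTo x).card : ℝ) := by exact_mod_cast hP
    have habs := hK α β x h0α hαβ hβπ hx
    have hup := (abs_le.mp habs).2
    -- integral bound
    have hint : (∫ θ in α..β, Real.sin θ ^ 2) ≤ β - α := by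
      have h1 : (∫ θ in α..β, Real.sin θ ^ 2) ≤ ∫ _θ in α..β, (1:ℝ) := by
        apply intervalIntegral.integral_mono_on hαβ
        · exact Continuous.intervalIntegrable (by continuity) _ _
        · exact intervalIntegrable_const
        · intro t _ht
          nlinarith [Real.sin_le_one t, Real.neg_one_le_sin t]
      simpa using h1
    have hlen : β - α = 2 * Real.arcsin (ε/2) := by
      rw [hβ, hα, Real.arccos_eq_pi_div_two_sub_arcsin]; ring
    have harc : Real.arcsin (ε/2) ≤ ε := by
      have := aux_arcsin_le (t := ε/2) (by linarith) (by linarith); linarith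
    have hI : (2/Real.pi) * (∫ θ in α..β, Real.sin θ ^ 2) ≤ 2*ε := by
      have h2π : 2/Real.pi ≤ 1 := by
        rw [div_le_one hπ]; exact Real.two_le_pi
      have hnn : (0:ℝ) ≤ 2/Real.pi := by positivity
      have hi2 : (∫ θ in α..β, Real.sin θ ^ 2) ≤ 2*ε := by
        calc (∫ θ in α..β, Real.sin θ ^ 2) ≤ β - α := hint
          _ = 2 * Real.arcsin (ε/2) := hlen
          _ ≤ 2*ε := by linarith
      calc (2/Real.pi) * (∫ θ in α..β, Real.sin θ ^ 2) ≤ (2/Real.pi) * (2*ε) :=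
            mul_le_mul_of_nonneg_left hi2 hnn
        _ ≤ 1 * (2*ε) := mul_le_mul_of_nonneg_right h2π (by linarith)
        _ = 2*ε := one_mul _
    have hdiv : (((primesUpTo x).filter (fun p => thetaOf a p ∈ Set.Icc α β)).card : ℝ)
        ≤ ((primesUpTo x).card : ℝ) * (2 * ε + K₀ * (log2 x) ^ (-A)) := by
      have h1 : (((primesUpTo x).filter (fun p => thetaOf a p ∈ Set.Icc α β)).card : ℝ) /
          ((primesUpTo x).card : ℝ) ≤ 2 * ε + K₀ * (log2 x) ^ (-A) := by linarith
      have h2 := (div_le_iff₀ hPpos).mp h1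
      linarith [h2, mul_comm ((2 * ε + K₀ * (log2 x) ^ (-A))) (((primesUpTo x).card : ℝ))]
    calc (((primesUpTo x).filter (fun p => |a p| < ε)).card : ℝ)
        ≤ _ := hcard
      _ ≤ _ := hdiv
end AuxST2

section AuxCheby

lemma aux_cheby (m : ℕ) (hm : 2 ≤ m) :
    (((Finset.range (m+1)).filter Nat.Prime).card : ℝ) * Real.log m ≤ 8 * m := by
  set n := Nat.sqrt m with hn
  have hn1 : 1 ≤ n := by
    rw [hn]; exact Nat.sqrt_pos.mpr (by omega)
  set T := (Finset.Ioc n m).filter Nat.Prime with hT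
  have hTsub : T ⊆ (Finset.range (m+1)).filter Nat.Prime := by
    intro p hp
    rw [hT, Finset.mem_filter, Finset.mem_Ioc] at hp
    rw [Finset.mem_filter, Finset.mem_range]
    exact ⟨by omega, hp.2⟩
  have hpowle : (n+1) ^ T.card ≤ 4 ^ m := by
    calc (n+1) ^ T.card ≤ ∏ p ∈ T, p := by
          apply Finset.pow_card_le_prod
          intro p hp
          rw [hT, Finset.mem_filter, Finset.mem_Ioc] at hp
          omega
      _ ≤ primorial m := by
          apply Nat.le_of_dvd (primorial_pos m)
          exact Finset.prod_dvd_prod_of_subset T _ _ hTsub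
      _ ≤ 4 ^ m := primorial_le_4_pow m
  have hlogT : (T.card : ℝ) * Real.log (n+1) ≤ m * Real.log 4 := by
    have h1 : ((n+1:ℕ):ℝ) ^ T.card ≤ ((4:ℕ):ℝ) ^ m := by exact_mod_cast hpowle
    have h2 := Real.log_le_log (by positivity) h1
    rw [Real.log_pow, Real.log_pow] at h2
    push_cast at h2 ⊢
    exact h2
  have hsplit : ((Finset.range (m+1)).filter Nat.Prime).card ≤ (n+1) + T.card := by
    have hsub2 : (Finset.range (m+1)).filter Nat.Prime ⊆
        ((Finset.range (n+1)).filter Nat.Prime) ∪ T := by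
      intro p hp
      rw [Finset.mem_filter, Finset.mem_range] at hp
      rw [Finset.mem_union, Finset.mem_filter, Finset.mem_filter, Finset.mem_range,
        Finset.mem_Ioc]
      rcases le_or_gt p n with h | h
      · exact Or.inl ⟨by omega, hp.2⟩
      · exact Or.inr ⟨⟨h, by omega⟩, hp.2⟩
    calc ((Finset.range (m+1)).filter Nat.Prime).card
        ≤ (((Finset.range (n+1)).filter Nat.Prime) ∪ T).card := Finset.card_le_card hsub2
      _ ≤ ((Finset.range (n+1)).filter Nat.Prime).card + T.card := Finset.card_union_le _ _
      _ ≤ (n+1) + T.card := by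
          have := Finset.card_filter_le (Finset.range (n+1)) Nat.Prime
          rw [Finset.card_range] at this
          omega
  -- real arithmetic
  have hmn2 : (m:ℝ) ≤ ((n:ℝ)+1)^2 := by
    have h := Nat.lt_succ_sqrt' m
    have h2 : m < (n+1)^2 := by simpa [hn, Nat.succ_eq_add_one] using h
    exact_mod_cast h2.le
  have hn2m : ((n:ℝ))^2 ≤ m := by exact_mod_cast Nat.sqrt_le' m
  have hnpos : (0:ℝ) < n := by exact_mod_cast hn1
  have hlogm_nonneg : 0 ≤ Real.log m := Real.log_nonneg (by exact_mod_cast hm.trans' (by norm_num) : (1:ℝ) ≤ m)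
  have hlogm : Real.log m ≤ 2 * Real.log ((n:ℝ)+1) := by
    have h1 : Real.log m ≤ Real.log (((n:ℝ)+1)^2) :=
      Real.log_le_log (by exact_mod_cast (by omega : 0 < m)) hmn2
    rwa [Real.log_pow, Nat.cast_ofNat] at h1
  have hlogn1 : Real.log ((n:ℝ)+1) ≤ (n:ℝ) := by
    have := Real.log_le_sub_one_of_pos (show (0:ℝ) < (n:ℝ)+1 by linarith)
    linarith
  have hlog4 : Real.log 4 ≤ 2 := by
    rw [show (4:ℝ) = 2^(2:ℕ) by norm_num, Real.log_pow]
    have := Real.log_two_lt_d9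
    push_cast
    nlinarith
  have hTnn : (0:ℝ) ≤ (T.card : ℝ) := by positivity
  have hcount : (((Finset.range (m+1)).filter Nat.Prime).card : ℝ) ≤ (n:ℝ)+1+T.card := by
    exact_mod_cast hsplit
  have hmnn : (0:ℝ) ≤ (m:ℝ) := by positivity
  have hlogn1nn : 0 ≤ Real.log ((n:ℝ)+1) := Real.log_nonneg (by linarith)
  calc (((Finset.range (m+1)).filter Nat.Prime).card : ℝ) * Real.log m
      ≤ ((n:ℝ)+1+T.card) * Real.log m := mul_le_mul_of_nonneg_right hcount hlogm_nonneg
    _ = ((n:ℝ)+1) * Real.log m + (T.card:ℝ) * Real.log m := by ring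
    _ ≤ ((n:ℝ)+1) * (2 * Real.log ((n:ℝ)+1)) + (T.card:ℝ) * (2 * Real.log ((n:ℝ)+1)) := by
        gcongr <;> linarith
    _ ≤ ((n:ℝ)+1) * (2 * (n:ℝ)) + 2 * ((m:ℝ) * Real.log 4) := by
        have h1 : ((n:ℝ)+1) * (2 * Real.log ((n:ℝ)+1)) ≤ ((n:ℝ)+1) * (2 * (n:ℝ)) := by
          gcongr
        have h2 : (T.card:ℝ) * (2 * Real.log ((n:ℝ)+1)) ≤ 2 * ((m:ℝ) * Real.log 4) := by
          nlinarith [hlogT]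
        linarith
    _ ≤ 8 * m := by
        have hn1R : (1:ℝ) ≤ (n:ℝ) := by exact_mod_cast hn1
        nlinarith [hn2m, hn1R, hlog4, hmnn]
end AuxCheby

section AuxTail

lemma aux_step (A : ℝ) (hA : 1 < A) (k : ℕ) (hk : 3 ≤ k) :
    (Real.log k) ^ (-A) / k ≤ (2^(A+1) / (A-1)) *
      ((Real.log k) ^ (-(A-1)) - (Real.log ((k:ℝ)+1)) ^ (-(A-1))) := by
  have hkR : (3:ℝ) ≤ (k:ℝ) := by exact_mod_cast hk
  have hkpos : (0:ℝ) < k := by linarith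
  set L := Real.log k with hL
  set M := Real.log ((k:ℝ)+1) with hM
  set q := A - 1 with hq
  have hq0 : 0 < q := by rw [hq]; linarith
  have hL1 : 1 < L := by
    rw [hL]
    have h3 : Real.log 3 ≤ Real.log k := Real.log_le_log (by norm_num) hkR
    have he : Real.exp 1 < 3 := by
      have := Real.exp_one_lt_d9; linarith
    have h1 : (1:ℝ) < Real.log 3 := by
      rw [← Real.log_exp 1]
      exact Real.log_lt_log (Real.exp_pos 1) he
    linarith
  have hLM : L ≤ M := Real.log_le_log hkpos (by linarith)
  have hM1 : 1 < M := lt_of_lt_of_le hL1 hLM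
  have hL0 : 0 < L := by linarith
  have hM0 : 0 < M := by linarith
  have hgap : 1/(2*(k:ℝ)) ≤ M - L := by
    have h1 : Real.log ((k:ℝ)/((k:ℝ)+1)) ≤ (k:ℝ)/((k:ℝ)+1) - 1 :=
      Real.log_le_sub_one_of_pos (by positivity)
    rw [Real.log_div (by positivity) (by positivity)] at h1
    have h2 : (k:ℝ)/((k:ℝ)+1) - 1 = -(1/((k:ℝ)+1)) := by field_simp; ring
    rw [h2] at h1
    have h3 : 1/((k:ℝ)+1) ≤ M - L := by rw [hM, hL]; linarith
    have h4 : 1/(2*(k:ℝ)) ≤ 1/((k:ℝ)+1) := by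
      apply div_le_div_of_nonneg_left one_pos.le (by positivity)
      linarith
    linarith
  have hM2L : M ≤ 2*L := by
    have h1 : ((k:ℝ)+1) ≤ (k:ℝ)^2 := by nlinarith
    have h2 : M ≤ Real.log ((k:ℝ)^2) := Real.log_le_log (by positivity) h1
    rw [Real.log_pow] at h2
    push_cast at h2
    linarith
  -- key convexity bound
  have key : 1 + q*((M-L)/M) ≤ (M/L)^q := by
    have hr : 0 < M/L := by positivity
    rw [Real.rpow_def_of_pos hr]
    have hlog : (M-L)/M ≤ Real.log (M/L) := by
      have h1 : Real.log (L/M) ≤ L/M - 1 := Real.log_le_sub_one_of_pos (by positivity)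
      rw [Real.log_div hL0.ne' hM0.ne'] at h1
      rw [Real.log_div hM0.ne' hL0.ne']
      have h2 : (M-L)/M = 1 - L/M := by field_simp
      rw [h2]; linarith
    have h3 : q*((M-L)/M) ≤ q*Real.log (M/L) := mul_le_mul_of_nonneg_left hlog hq0.le
    have h4 := Real.add_one_le_exp (Real.log (M/L) * q)
    calc 1 + q*((M-L)/M) ≤ 1 + q*Real.log (M/L) := by linarith
      _ = Real.log (M/L) * q + 1 := by ring
      _ ≤ Real.exp (Real.log (M/L) * q) := h4
  -- assemble
  have hMq : (0:ℝ) < M^(-q) := Real.rpow_pos_of_pos hM0 _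
  have e1 : M^(-q) * (M/L)^q = L^(-q) := by
    rw [Real.div_rpow hM0.le hL0.le, Real.rpow_neg hM0.le, Real.rpow_neg hL0.le]
    have hMq' : (0:ℝ) < M^q := Real.rpow_pos_of_pos hM0 _
    have hLq' : (0:ℝ) < L^q := Real.rpow_pos_of_pos hL0 _
    field_simp
  have e2 : M^(-q) * (q*((M-L)/M)) ≤ L^(-q) - M^(-q) := by
    have := mul_le_mul_of_nonneg_left key hMq.le
    rw [mul_add, mul_one, e1] at this
    linarith
  have e3 : M^(-q) * (q*((M-L)/M)) = q * (M-L) * M^(-A) := by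
    have hsplitA : (-A) = (-q) + (-1) := by rw [hq]; ring
    rw [hsplitA, Real.rpow_add hM0, Real.rpow_neg_one]
    field_simp
  have e4 : (2*L)^(-A) ≤ M^(-A) := Real.rpow_le_rpow_of_nonpos hM0 hM2L (by linarith)
  have e5 : (2*L)^(-A) = 2^(-A) * L^(-A) := Real.mul_rpow (by norm_num) hL0.le
  have hLA : (0:ℝ) < L^(-A) := Real.rpow_pos_of_pos hL0 _
  have h2A : (0:ℝ) < 2^(-A) := Real.rpow_pos_of_pos (by norm_num) _
  have hX : q * (1/(2*(k:ℝ))) * (2^(-A) * L^(-A)) ≤ L^(-q) - M^(-q) := by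
    have b1 : q * (1/(2*(k:ℝ))) * (2^(-A) * L^(-A)) ≤ q * (M-L) * ((2*L)^(-A)) := by
      rw [e5]
      have : 0 ≤ 2^(-A) * L^(-A) := by positivity
      have hmono := mul_le_mul_of_nonneg_right (mul_le_mul_of_nonneg_left hgap hq0.le) this
      linarith [hmono]
    have b2 : q * (M-L) * ((2*L)^(-A)) ≤ q * (M-L) * M^(-A) := by
      apply mul_le_mul_of_nonneg_left e4
      have : 0 ≤ M - L := by linarith
      positivity
    calc q * (1/(2*(k:ℝ))) * (2^(-A) * L^(-A)) ≤ q * (M-L) * M^(-A) := le_trans b1 b2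
      _ = M^(-q) * (q*((M-L)/M)) := e3.symm
      _ ≤ L^(-q) - M^(-q) := e2
  have hpow2 : (2:ℝ)^(A+1) * 2^(-A) = 2 := by
    rw [← Real.rpow_add (by norm_num : (0:ℝ) < 2)]
    norm_num
  have hc : (2^(A+1)/q) * (q * (1/(2*(k:ℝ))) * (2^(-A) * L^(-A))) = L^(-A)/(k:ℝ) := by
    have h2A1 : (0:ℝ) < (2:ℝ)^(A+1) := Real.rpow_pos_of_pos (by norm_num) _
    field_simp
    linear_combination hpow2
  calc L^(-A)/(k:ℝ) = (2^(A+1)/q) * (q * (1/(2*(k:ℝ))) * (2^(-A) * L^(-A))) := hc.symm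
    _ ≤ (2^(A+1)/q) * (L^(-q) - M^(-q)) := by
        apply mul_le_mul_of_nonneg_left hX
        positivity

end AuxTail

section AuxTail2

lemma aux_tail (A : ℝ) (hA : 1 < A) (k₀ N : ℕ) (hk₀ : 3 ≤ k₀) :
    ∑ k ∈ Finset.Ico k₀ N, (Real.log k) ^ (-A) / k ≤
      (2^(A+1)/(A-1)) * (Real.log k₀) ^ (-(A-1)) := by
  have hCA : (0:ℝ) ≤ 2^(A+1)/(A-1) := by
    apply div_nonneg (le_of_lt (Real.rpow_pos_of_pos (by norm_num) _)); linarith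
  have hf0 : ∀ n : ℕ, (0:ℝ) ≤ (Real.log n) ^ (-(A-1)) := by
    intro n
    apply Real.rpow_nonneg
    rcases Nat.eq_zero_or_pos n with h | h
    · simp [h]
    · exact Real.log_nonneg (by exact_mod_cast h)
  set f : ℕ → ℝ := fun n => (Real.log n) ^ (-(A-1)) with hf
  rcases le_or_gt k₀ N with h | h
  · have htel : ∑ k ∈ Finset.Ico k₀ N, (f k - f (k+1)) = f k₀ - f N := by
      rw [Finset.sum_Ico_eq_sub _ h, Finset.sum_range_sub' f, Finset.sum_range_sub' f]
      ring
    calc ∑ k ∈ Finset.Ico k₀ N, (Real.log k) ^ (-A) / k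
        ≤ ∑ k ∈ Finset.Ico k₀ N, (2^(A+1)/(A-1)) * (f k - f (k+1)) := by
          apply Finset.sum_le_sum
          intro k hk
          have h3k : 3 ≤ k := le_trans hk₀ (Finset.mem_Ico.mp hk).1
          have hs := aux_step A hA k h3k
          have hcast : ((k+1:ℕ):ℝ) = (k:ℝ)+1 := by push_cast; ring
          simp only [hf, hcast]
          exact hs
      _ = (2^(A+1)/(A-1)) * ∑ k ∈ Finset.Ico k₀ N, (f k - f (k+1)) := by
          rw [Finset.mul_sum]
      _ = (2^(A+1)/(A-1)) * (f k₀ - f N) := by rw [htel]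
      _ ≤ (2^(A+1)/(A-1)) * f k₀ := by
          apply mul_le_mul_of_nonneg_left _ hCA
          have := hf0 N
          simp only [hf]
          linarith
  · rw [Finset.Ico_eq_empty (by omega)]
    simp only [Finset.sum_empty]
    exact mul_nonneg hCA (hf0 k₀)

end AuxTail2

section AuxBlock

open scoped Classical in
lemma aux_block (a : ℕ → ℝ) (hbd : ∀ p : ℕ, p.Prime → a p ∈ Set.Icc (-2:ℝ) 2)
    (A K₀ : ℝ) (hA0 : 0 < A) (hK₀0 : 0 ≤ K₀)
    (hK : ∀ α β x : ℝ, 0 ≤ α → α ≤ β → β ≤ Real.pi → 3 ≤ x →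
      |(((primesUpTo x).filter (fun p => thetaOf a p ∈ Set.Icc α β)).card : ℝ) /
        ((primesUpTo x).card : ℝ) -
        (2 / Real.pi) * ∫ θ in α..β, Real.sin θ ^ 2| ≤ K₀ * (log2 x) ^ (-A))
    (k : ℕ) (hk : 1 ≤ k) (F : Finset ℕ)
    (hF : ∀ p ∈ F, p.Prime ∧ |a p| < (log2 (p:ℝ)) ^ (-A) ∧ ⌊Real.log (p:ℝ)⌋₊ = k) :
    ∑ p ∈ F, (1:ℝ)/(p:ℝ) ≤ (8 * Real.exp 1 * (2+K₀)) * ((log1 (k:ℝ))^(-A) / k) := by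
  have hkR : (1:ℝ) ≤ (k:ℝ) := by exact_mod_cast hk
  set ε := (log1 (k:ℝ))^(-A) with hε
  have hε0 : 0 < ε := Real.rpow_pos_of_pos (aux_log1_pos _) _
  have hε1 : ε ≤ 1 := Real.rpow_le_one_of_one_le_of_nonpos (aux_log1_ge_one _) (by linarith)
  set x := Real.exp ((k:ℝ)+1) with hx
  have hexp1 : (2.7182818283:ℝ) < Real.exp 1 := Real.exp_one_gt_d9
  have hx3 : 3 ≤ x := by
    have h1 : Real.exp 2 ≤ x := Real.exp_le_exp.mpr (by linarith)
    have h2 : Real.exp 2 = Real.exp 1 * Real.exp 1 := by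
      rw [← Real.exp_add]; norm_num
    nlinarith
  -- facts about members of F
  have hmem : ∀ p ∈ F, Real.exp (k:ℝ) ≤ (p:ℝ) ∧ (p:ℝ) < x := by
    intro p hp
    obtain ⟨hprime, _, hfloor⟩ := hF p hp
    have hp0 : (0:ℝ) < (p:ℝ) := by exact_mod_cast hprime.pos
    have hlogp0 : 0 ≤ Real.log (p:ℝ) := Real.log_nonneg (by exact_mod_cast hprime.one_lt.le)
    constructor
    · have h1 : ((k:ℝ)) ≤ Real.log (p:ℝ) := by
        rw [← hfloor]
        exact Nat.floor_le hlogp0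
      calc Real.exp (k:ℝ) ≤ Real.exp (Real.log (p:ℝ)) := Real.exp_le_exp.mpr h1
        _ = (p:ℝ) := Real.exp_log hp0
    · have h2 : Real.log (p:ℝ) < (k:ℝ)+1 := by
        have := Nat.lt_floor_add_one (Real.log (p:ℝ))
        rw [hfloor] at this
        exact_mod_cast this
      calc (p:ℝ) = Real.exp (Real.log (p:ℝ)) := (Real.exp_log hp0).symm
        _ < x := Real.exp_lt_exp.mpr h2
  -- F is a subset of the small-|a_p| primes up to x
  have hsub : F ⊆ (primesUpTo x).filter (fun p => |a p| < ε) := by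
    intro p hp
    obtain ⟨hprime, hsmall, hfloor⟩ := hF p hp
    obtain ⟨_hlow, hup⟩ := hmem p hp
    rw [Finset.mem_filter]
    constructor
    · rw [primesUpTo, Finset.mem_filter, Finset.mem_range]
      exact ⟨Nat.lt_succ_of_le (Nat.le_floor hup.le), hprime⟩
    · -- |a p| < ε
      have hlogp0 : 0 ≤ Real.log (p:ℝ) := Real.log_nonneg (by exact_mod_cast hprime.one_lt.le)
      have h1 : (k:ℝ) ≤ log1 (p:ℝ) := by
        rw [← hfloor]
        exact le_trans (Nat.floor_le hlogp0) (le_max_left _ _)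
      have h2 : log1 (k:ℝ) ≤ log2 (p:ℝ) :=
        aux_log1_mono (Nat.cast_nonneg k) h1
      have h3 : (log2 (p:ℝ))^(-A) ≤ ε :=
        Real.rpow_le_rpow_of_nonpos (aux_log1_pos _) h2 (by linarith)
      exact lt_of_lt_of_le hsmall h3
  -- counting
  have hcount := aux_count a hbd A K₀ hK hε0 hε1 hx3
  have hlog2x : (log2 x)^(-A) ≤ ε := by
    have h1 : log1 x = (k:ℝ)+1 := by
      rw [hx, log1, Real.log_exp]
      exact max_eq_left (by linarith)
    have h2 : log1 (k:ℝ) ≤ log2 x := by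
      rw [log2, h1]
      exact aux_log1_mono (by positivity) (by linarith)
    exact Real.rpow_le_rpow_of_nonpos (aux_log1_pos _) h2 (by linarith)
  have hP0 : (0:ℝ) ≤ ((primesUpTo x).card : ℝ) := by positivity
  have hcard : (F.card : ℝ) ≤ ((primesUpTo x).card : ℝ) * ((2+K₀) * ε) := by
    have h1 : (F.card : ℝ) ≤ (((primesUpTo x).filter (fun p => |a p| < ε)).card : ℝ) := by
      exact_mod_cast Finset.card_le_card hsub
    have h2 : 2 * ε + K₀ * (log2 x)^(-A) ≤ (2+K₀) * ε := by
      have := mul_le_mul_of_nonneg_left hlog2x hK₀0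
      nlinarith
    calc (F.card : ℝ) ≤ _ := h1
      _ ≤ ((primesUpTo x).card : ℝ) * (2 * ε + K₀ * (log2 x)^(-A)) := hcount
      _ ≤ ((primesUpTo x).card : ℝ) * ((2+K₀) * ε) := mul_le_mul_of_nonneg_left h2 hP0
  -- Chebyshev bound on the number of primes up to x
  set m := ⌊x⌋₊ with hm
  have hm2 : 2 ≤ m := Nat.le_floor (by push_cast; linarith)
  have hcheby : (((Finset.range (m+1)).filter Nat.Prime).card : ℝ) * Real.log m ≤ 8 * m :=
    aux_cheby m hm2
  have hPeq : (primesUpTo x).card = ((Finset.range (m+1)).filter Nat.Prime).card := rfl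
  have hexpk1 : (1:ℝ) ≤ Real.exp (k:ℝ) := Real.one_le_exp (by positivity)
  have hmx : (m:ℝ) ≤ x := Nat.floor_le (by positivity)
  have hem : Real.exp (k:ℝ) ≤ (m:ℝ) := by
    have h1 : x - 1 < (m:ℝ) := Nat.sub_one_lt_floor x
    have h2 : Real.exp ((k:ℝ)+1) = Real.exp (k:ℝ) * Real.exp 1 := by
      rw [← Real.exp_add]
    nlinarith
  have hlogm : (k:ℝ) ≤ Real.log m := by
    calc (k:ℝ) = Real.log (Real.exp (k:ℝ)) := (Real.log_exp _).symm
      _ ≤ Real.log m := Real.log_le_log (Real.exp_pos _) hem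
  have hPbound : ((primesUpTo x).card : ℝ) * (k:ℝ) ≤ 8 * x := by
    have h1 : ((primesUpTo x).card : ℝ) * (k:ℝ) ≤ ((primesUpTo x).card : ℝ) * Real.log m :=
      mul_le_mul_of_nonneg_left hlogm hP0
    rw [hPeq] at h1 ⊢
    calc (((Finset.range (m+1)).filter Nat.Prime).card : ℝ) * (k:ℝ) ≤ _ := h1
      _ ≤ 8 * m := hcheby
      _ ≤ 8 * x := by linarith
  -- sum over F
  have hsum : ∑ p ∈ F, (1:ℝ)/(p:ℝ) ≤ (F.card : ℝ) * (Real.exp (k:ℝ))⁻¹ := by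
    have h1 := Finset.sum_le_card_nsmul F (fun p => (1:ℝ)/(p:ℝ)) ((Real.exp (k:ℝ))⁻¹) ?_
    · simpa [nsmul_eq_mul] using h1
    · intro p hp
      obtain ⟨hlow, _⟩ := hmem p hp
      show (1:ℝ)/(p:ℝ) ≤ (Real.exp (k:ℝ))⁻¹
      rw [one_div]
      exact inv_anti₀ (Real.exp_pos _) hlow
  -- combine
  have hkpos : (0:ℝ) < (k:ℝ) := by linarith
  have hfinal : (F.card : ℝ) * (Real.exp (k:ℝ))⁻¹ ≤ (8 * Real.exp 1 * (2+K₀)) * (ε / k) := by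
    have hc1 : (F.card : ℝ) ≤ (8 * x / (k:ℝ)) * ((2+K₀) * ε) := by
      have hP8 : ((primesUpTo x).card : ℝ) ≤ 8 * x / (k:ℝ) := by
        rw [le_div_iff₀ hkpos]
        exact hPbound
      calc (F.card : ℝ) ≤ ((primesUpTo x).card : ℝ) * ((2+K₀) * ε) := hcard
        _ ≤ (8 * x / (k:ℝ)) * ((2+K₀) * ε) := by
            apply mul_le_mul_of_nonneg_right hP8
            positivity
    have hc2 : (F.card : ℝ) * (Real.exp (k:ℝ))⁻¹ ≤
        (8 * x / (k:ℝ)) * ((2+K₀) * ε) * (Real.exp (k:ℝ))⁻¹ := by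
      apply mul_le_mul_of_nonneg_right hc1
      positivity
    have hxe : x * (Real.exp (k:ℝ))⁻¹ = Real.exp 1 := by
      rw [hx, ← Real.exp_neg, ← Real.exp_add]
      norm_num
    calc (F.card : ℝ) * (Real.exp (k:ℝ))⁻¹ ≤ _ := hc2
      _ = (8 * (x * (Real.exp (k:ℝ))⁻¹) * (2+K₀)) * (ε / (k:ℝ)) := by ring
      _ = (8 * Real.exp 1 * (2+K₀)) * (ε / (k:ℝ)) := by rw [hxe]
  linarith

end AuxBlock

set_option maxHeartbeats 1000000 in
open scoped Classical in
theorem sum_recip_small_ap' (a : ℕ → ℝ) (hbd : ∀ p : ℕ, p.Prime → a p ∈ Set.Icc (-2:ℝ) 2)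
    (A : ℝ) (hA : 1 < A) (K₀ : ℝ)
    (hK₀ : ∀ α β x : ℝ, 0 ≤ α → α ≤ β → β ≤ Real.pi → 3 ≤ x →
      |(((primesUpTo x).filter (fun p => thetaOf a p ∈ Set.Icc α β)).card : ℝ) /
        ((primesUpTo x).card : ℝ) -
        (2 / Real.pi) * ∫ θ in α..β, Real.sin θ ^ 2| ≤ K₀ * (log2 x) ^ (-A)) :
    ∃ K : ℝ, ∀ y : ℝ, 2 ≤ y → ∀ N : ℕ,
      ∑ p ∈ (Finset.range N).filter
          (fun p : ℕ => p.Prime ∧ y ≤ (p : ℝ) ∧ |a p| < (log2 (p : ℝ)) ^ (-A)),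
        (1 : ℝ) / (p : ℝ)
        ≤ K * (log2 y) ^ (-(A - 1)) := by
  have hA0 : (0:ℝ) < A := by linarith
  -- K₀ is nonnegative
  have hK₀0 : 0 ≤ K₀ := by
    have h := hK₀ 0 0 3 le_rfl le_rfl Real.pi_pos.le le_rfl
    have h0 := le_trans (abs_nonneg _) h
    have hE3 : (0:ℝ) < (log2 3)^(-A) := Real.rpow_pos_of_pos (aux_log1_pos _) _
    by_contra hneg
    push_neg at hneg
    nlinarith
  set c := 8 * Real.exp 1 * (2+K₀) with hc
  have hc0 : 0 ≤ c := by
    have := Real.exp_pos 1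
    rw [hc]; nlinarith
  set CA := (2:ℝ)^(A+1)/(A-1) with hCA
  have hCA0 : 0 ≤ CA := by
    rw [hCA]
    apply div_nonneg (le_of_lt (Real.rpow_pos_of_pos (by norm_num) _))
    linarith
  set B1 := 1/2 + 2*c + c*CA with hB1
  have hB10 : 0 ≤ B1 := by rw [hB1]; nlinarith
  have h10A : (0:ℝ) ≤ (10:ℝ)^(A-1) := le_of_lt (Real.rpow_pos_of_pos (by norm_num) _)
  have h2A : (0:ℝ) ≤ (2:ℝ)^(A-1) := le_of_lt (Real.rpow_pos_of_pos (by norm_num) _)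
  refine ⟨B1 * 10^(A-1) + c*CA*2^(A-1), ?_⟩
  intro y hy N
  set F := (Finset.range N).filter
      (fun p : ℕ => p.Prime ∧ y ≤ (p : ℝ) ∧ |a p| < (log2 (p : ℝ)) ^ (-A)) with hF
  have hEy : (0:ℝ) < (log2 y)^(-(A-1)) := Real.rpow_pos_of_pos (aux_log1_pos _) _
  -- properties of members of F
  have hFmem : ∀ p ∈ F, p.Prime ∧ y ≤ (p:ℝ) ∧ |a p| < (log2 (p:ℝ))^(-A) ∧ p < N := by
    intro p hp
    rw [hF, Finset.mem_filter, Finset.mem_range] at hp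
    exact ⟨hp.2.1, hp.2.2.1, hp.2.2.2, hp.1⟩
  have hmapsN : ∀ p ∈ F, ⌊Real.log (p:ℝ)⌋₊ < N + 3 := by
    intro p hp
    obtain ⟨hprime, _, _, hpN⟩ := hFmem p hp
    have hp0 : (0:ℝ) < (p:ℝ) := by exact_mod_cast hprime.pos
    have h1 : Real.log (p:ℝ) ≤ (p:ℝ) - 1 := Real.log_le_sub_one_of_pos hp0
    have h2 : (⌊Real.log (p:ℝ)⌋₊ : ℝ) < (p:ℝ) := by
      rcases le_or_gt (Real.log (p:ℝ)) 0 with h | h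
      · have : ⌊Real.log (p:ℝ)⌋₊ = 0 := Nat.floor_eq_zero.mpr (by linarith [Nat.lt_floor_add_one (Real.log (p:ℝ))] <;> linarith)
        rw [this]; exact_mod_cast hprime.pos
      · calc (⌊Real.log (p:ℝ)⌋₊ : ℝ) ≤ Real.log (p:ℝ) := Nat.floor_le h.le
          _ < (p:ℝ) := by linarith
    have h3 : ⌊Real.log (p:ℝ)⌋₊ < p := by exact_mod_cast h2
    omega
  -- bound on each fiber with index ≥ 1
  have hfib : ∀ j : ℕ, 1 ≤ j →
      ∑ p ∈ F.filter (fun p : ℕ => ⌊Real.log (p:ℝ)⌋₊ = j), (1:ℝ)/(p:ℝ) ≤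
        c * ((log1 (j:ℝ))^(-A) / j) := by
    intro j hj
    have := aux_block a hbd A K₀ hA0 hK₀0 hK₀ j hj
      (F.filter (fun p : ℕ => ⌊Real.log (p:ℝ)⌋₊ = j)) ?_
    · rw [hc]; exact this
    · intro p hp
      rw [Finset.mem_filter] at hp
      obtain ⟨hprime, _, hsmall, _⟩ := hFmem p hp.1
      exact ⟨hprime, hsmall, hp.2⟩
  -- the zero fiber
  have hfib0 : ∑ p ∈ F.filter (fun p : ℕ => ⌊Real.log (p:ℝ)⌋₊ = 0), (1:ℝ)/(p:ℝ) ≤ 1/2 := by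
    have hsub : F.filter (fun p : ℕ => ⌊Real.log (p:ℝ)⌋₊ = 0) ⊆ {2} := by
      intro p hp
      rw [Finset.mem_filter] at hp
      obtain ⟨hprime, _, _, _⟩ := hFmem p hp.1
      have hp0 : (0:ℝ) < (p:ℝ) := by exact_mod_cast hprime.pos
      have h1 : Real.log (p:ℝ) < 1 := by
        have := Nat.lt_floor_add_one (Real.log (p:ℝ))
        rw [hp.2] at this
        simpa using this
      have h2 : (p:ℝ) < Real.exp 1 := by
        calc (p:ℝ) = Real.exp (Real.log (p:ℝ)) := (Real.exp_log hp0).symm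
          _ < Real.exp 1 := Real.exp_lt_exp.mpr h1
      have h3 : (p:ℝ) < 3 := by
        have := Real.exp_one_lt_d9
        linarith
      have h4 : p < 3 := by exact_mod_cast h3
      have h5 : 2 ≤ p := hprime.two_le
      rw [Finset.mem_singleton]
      omega
    calc ∑ p ∈ F.filter (fun p : ℕ => ⌊Real.log (p:ℝ)⌋₊ = 0), (1:ℝ)/(p:ℝ)
        ≤ ∑ p ∈ ({2} : Finset ℕ), (1:ℝ)/(p:ℝ) := by
          apply Finset.sum_le_sum_of_subset_of_nonneg hsub
          intro p _ _
          exact one_div_nonneg.mpr (Nat.cast_nonneg p)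
      _ = 1/2 := by norm_num
  -- fibers with 3 ≤ j : uniform tail bound
  have hfib3 : ∀ (t : Finset ℕ) (k₀ : ℕ), 3 ≤ k₀ → ∀ M : ℕ,
      ∑ j ∈ Finset.Ico k₀ M, (∑ p ∈ F.filter (fun p : ℕ => ⌊Real.log (p:ℝ)⌋₊ = j), (1:ℝ)/(p:ℝ))
        ≤ c * (CA * (Real.log k₀)^(-(A-1))) := by
    intro _t k₀ hk₀ M
    have h1 : ∑ j ∈ Finset.Ico k₀ M,
        (∑ p ∈ F.filter (fun p : ℕ => ⌊Real.log (p:ℝ)⌋₊ = j), (1:ℝ)/(p:ℝ))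
        ≤ ∑ j ∈ Finset.Ico k₀ M, c * ((Real.log (j:ℝ))^(-A) / j) := by
      apply Finset.sum_le_sum
      intro j hj
      have hj3 : 3 ≤ j := le_trans hk₀ (Finset.mem_Ico.mp hj).1
      have hlog1j : log1 (j:ℝ) = Real.log (j:ℝ) := by
        apply aux_log1_of_one_le
        have h3 : Real.log 3 ≤ Real.log (j:ℝ) :=
          Real.log_le_log (by norm_num) (by exact_mod_cast hj3)
        have he : Real.exp 1 < 3 := by have := Real.exp_one_lt_d9; linarith
        have : (1:ℝ) < Real.log 3 := by
          rw [← Real.log_exp 1]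
          exact Real.log_lt_log (Real.exp_pos 1) he
        linarith
      have := hfib j (by omega)
      rw [hlog1j] at this
      exact this
    have h2 : ∑ j ∈ Finset.Ico k₀ M, c * ((Real.log (j:ℝ))^(-A) / j)
        = c * ∑ j ∈ Finset.Ico k₀ M, (Real.log (j:ℝ))^(-A) / j := by
      rw [Finset.mul_sum]
    have h3 := aux_tail A hA k₀ M hk₀
    calc _ ≤ _ := h1
      _ = _ := h2
      _ ≤ c * (CA * (Real.log k₀)^(-(A-1))) := by
          apply mul_le_mul_of_nonneg_left _ hc0
          rw [hCA]
          exact h3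
  -- main case analysis
  rcases le_or_gt (log2 y) 10 with hcase | hcase
  · -- small y : bound the full sum by an absolute constant
    have hmaps : ∀ p ∈ F, ⌊Real.log (p:ℝ)⌋₊ ∈ Finset.range (N+3) := by
      intro p hp
      rw [Finset.mem_range]
      exact hmapsN p hp
    have hdec := Finset.sum_fiberwise_of_maps_to hmaps (fun p => (1:ℝ)/(p:ℝ))
    have hlog31 : (1:ℝ) ≤ Real.log 3 := by
      have he : Real.exp 1 < 3 := by have := Real.exp_one_lt_d9; linarith
      have : (1:ℝ) < Real.log 3 := by
        rw [← Real.log_exp 1]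
        exact Real.log_lt_log (Real.exp_pos 1) he
      linarith
    have hsum3 := hfib3 ∅ 3 le_rfl (N+3)
    have hEmono : 1 ≤ 10^(A-1) * (log2 y)^(-(A-1)) := by
      have hly1 : (1:ℝ) ≤ log2 y := aux_log1_ge_one _
      have h1 : (1:ℝ) ≤ 10/(log2 y) := by
        rw [le_div_iff₀ (by linarith)]
        linarith
      have h2 : (1:ℝ) ≤ (10/(log2 y))^(A-1) := by
        calc (1:ℝ) = 1^(A-1) := (Real.one_rpow _).symm
          _ ≤ (10/(log2 y))^(A-1) := Real.rpow_le_rpow (by norm_num) h1 (by linarith)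
      have h3 : (10/(log2 y))^(A-1) = 10^(A-1) * (log2 y)^(-(A-1)) := by
        rw [Real.div_rpow (by norm_num) (by linarith), Real.rpow_neg (by linarith)]
        ring
      rw [← h3]
      exact h2
    calc ∑ p ∈ F, (1:ℝ)/(p:ℝ)
        = ∑ j ∈ Finset.range (N+3),
            ∑ p ∈ F.filter (fun p : ℕ => ⌊Real.log (p:ℝ)⌋₊ = j), (1:ℝ)/(p:ℝ) := hdec.symm
      _ = (∑ j ∈ Finset.Ico 0 3,
            ∑ p ∈ F.filter (fun p : ℕ => ⌊Real.log (p:ℝ)⌋₊ = j), (1:ℝ)/(p:ℝ))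
          + ∑ j ∈ Finset.Ico 3 (N+3),
            ∑ p ∈ F.filter (fun p : ℕ => ⌊Real.log (p:ℝ)⌋₊ = j), (1:ℝ)/(p:ℝ) := by
          rw [Finset.range_eq_Ico, ← Finset.sum_Ico_consecutive _ (Nat.zero_le 3) (by omega)]
      _ ≤ (1/2 + c + c) + c * (CA * (Real.log 3)^(-(A-1))) := by
          apply add_le_add _ hsum3
          have e1 : Finset.Ico 0 3 = Finset.range 3 := by rw [Finset.range_eq_Ico]
          rw [e1, Finset.sum_range_succ, Finset.sum_range_succ, Finset.sum_range_one]
          have hf1 : ∑ p ∈ F.filter (fun p : ℕ => ⌊Real.log (p:ℝ)⌋₊ = 1), (1:ℝ)/(p:ℝ) ≤ c := by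
            have := hfib 1 le_rfl
            have e2 : (log1 ((1:ℕ):ℝ))^(-A) / ((1:ℕ):ℝ) = 1 := by
              have : log1 ((1:ℕ):ℝ) = 1 := by
                simp [log1, Real.log_one]
              rw [this, Real.one_rpow]
              norm_num
            rw [e2, mul_one] at this
            exact this
          have hf2 : ∑ p ∈ F.filter (fun p : ℕ => ⌊Real.log (p:ℝ)⌋₊ = 2), (1:ℝ)/(p:ℝ) ≤ c := by
            have h := hfib 2 (by omega)
            have e2 : (log1 ((2:ℕ):ℝ))^(-A) / ((2:ℕ):ℝ) ≤ 1 := by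
              have h1 : (log1 ((2:ℕ):ℝ))^(-A) ≤ 1 :=
                Real.rpow_le_one_of_one_le_of_nonpos (aux_log1_ge_one _) (by linarith)
              have h2 : (0:ℝ) < (log1 ((2:ℕ):ℝ))^(-A) := Real.rpow_pos_of_pos (aux_log1_pos _) _
              rw [show ((2:ℕ):ℝ) = 2 by norm_num] at h1 h2 ⊢
              linarith
            calc ∑ p ∈ F.filter (fun p : ℕ => ⌊Real.log (p:ℝ)⌋₊ = 2), (1:ℝ)/(p:ℝ)
                ≤ c * ((log1 ((2:ℕ):ℝ))^(-A) / ((2:ℕ):ℝ)) := h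
              _ ≤ c * 1 := mul_le_mul_of_nonneg_left e2 hc0
              _ = c := mul_one c
          linarith [hfib0]
      _ ≤ B1 := by
          have h1 : (Real.log 3)^(-(A-1)) ≤ 1 :=
            Real.rpow_le_one_of_one_le_of_nonpos hlog31 (by linarith)
          have h2 : c * (CA * (Real.log 3)^(-(A-1))) ≤ c * CA := by
            have := mul_le_mul_of_nonneg_left h1 hCA0
            calc c * (CA * (Real.log 3)^(-(A-1))) ≤ c * (CA * 1) :=
                  mul_le_mul_of_nonneg_left (by linarith) hc0
              _ = c * CA := by ring
          rw [hB1]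
          linarith
      _ ≤ (B1 * 10^(A-1) + c*CA*2^(A-1)) * (log2 y)^(-(A-1)) := by
          have ht : 0 ≤ c*CA*2^(A-1) * (log2 y)^(-(A-1)) :=
            mul_nonneg (mul_nonneg (mul_nonneg hc0 hCA0) h2A) hEy.le
          have hB1E := mul_le_mul_of_nonneg_left hEmono hB10
          rw [mul_one] at hB1E
          nlinarith [hB1E, ht]
  · -- large y
    set k₀ := ⌊Real.log y⌋₊ with hk₀
    have hmax : log2 y = Real.log (log1 y) := by
      rcases max_choice (Real.log (log1 y)) 1 with h | h
      · exact h
      · exfalso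
        have : log2 y = 1 := h
        linarith
    have hexp10 : (11:ℝ) ≤ Real.exp 10 := by
      have := Real.add_one_le_exp (10:ℝ)
      linarith
    have hL1 : Real.exp 10 < log1 y := by
      have h2 : (10:ℝ) < Real.log (log1 y) := by rw [← hmax]; exact hcase
      calc Real.exp 10 < Real.exp (Real.log (log1 y)) := Real.exp_lt_exp.mpr h2
        _ = log1 y := Real.exp_log (aux_log1_pos y)
    have hlogy : log1 y = Real.log y := by
      rcases max_choice (Real.log y) 1 with h | h
      · exact h
      · exfalso
        have : log1 y = 1 := h
        linarith
    have hLge : (11:ℝ) < Real.log y := by rw [← hlogy]; linarith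
    have hk₀L : Real.log y - 1 < (k₀:ℝ) := by
      rw [hk₀]
      exact Nat.sub_one_lt_floor _
    have hk₀3 : 3 ≤ k₀ := by
      rw [hk₀]
      apply Nat.le_floor
      push_cast
      linarith
    have hu : log2 y = Real.log (Real.log y) := by rw [hmax, hlogy]
    have hlogk₀ : (log2 y)/2 ≤ Real.log k₀ := by
      have ha : Real.log y / 2 ≤ (k₀:ℝ) := by linarith
      have hb : Real.log (Real.log y / 2) ≤ Real.log k₀ :=
        Real.log_le_log (by linarith) ha
      have hcc : Real.log (Real.log y / 2) = Real.log (Real.log y) - Real.log 2 :=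
        Real.log_div (by linarith) (by norm_num)
      have hd : Real.log 2 < 1 := by have := Real.log_two_lt_d9; linarith
      have hLlog : 2 ≤ Real.log (Real.log y) := by rw [← hu]; linarith
      rw [hu]
      linarith
    have hmaps : ∀ p ∈ F, ⌊Real.log (p:ℝ)⌋₊ ∈ Finset.Ico k₀ (N+3) := by
      intro p hp
      rw [Finset.mem_Ico]
      refine ⟨?_, hmapsN p hp⟩
      obtain ⟨hprime, hyp, _, _⟩ := hFmem p hp
      rw [hk₀]
      exact Nat.floor_mono (Real.log_le_log (by linarith) hyp)
    have hdec := Finset.sum_fiberwise_of_maps_to hmaps (fun p => (1:ℝ)/(p:ℝ))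
    calc ∑ p ∈ F, (1:ℝ)/(p:ℝ)
        = ∑ j ∈ Finset.Ico k₀ (N+3),
            ∑ p ∈ F.filter (fun p : ℕ => ⌊Real.log (p:ℝ)⌋₊ = j), (1:ℝ)/(p:ℝ) := hdec.symm
      _ ≤ c * (CA * (Real.log k₀)^(-(A-1))) := hfib3 ∅ k₀ hk₀3 (N+3)
      _ ≤ c * (CA * (2^(A-1) * (log2 y)^(-(A-1)))) := by
          apply mul_le_mul_of_nonneg_left _ hc0
          apply mul_le_mul_of_nonneg_left _ hCA0
          have hupos : (0:ℝ) < log2 y := aux_log1_pos _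
          have hhalf : (0:ℝ) < (log2 y)/2 := by linarith
          have e1 : ((log2 y)/2)^(-(A-1)) = 2^(A-1) * (log2 y)^(-(A-1)) := by
            rw [Real.div_rpow (by linarith : (0:ℝ) ≤ log2 y) (by norm_num : (0:ℝ) ≤ (2:ℝ)),
              Real.rpow_neg (by norm_num : (0:ℝ) ≤ (2:ℝ)), Real.rpow_neg (by linarith : (0:ℝ) ≤ log2 y)]
            rw [div_eq_mul_inv, inv_inv]
            ring
          rw [← e1]
          exact Real.rpow_le_rpow_of_nonpos hhalf hlogk₀ (by linarith)
      _ ≤ (B1 * 10^(A-1) + c*CA*2^(A-1)) * (log2 y)^(-(A-1)) := by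
          have ht : 0 ≤ B1 * 10^(A-1) * (log2 y)^(-(A-1)) :=
            mul_nonneg (mul_nonneg hB10 h10A) hEy.le
          nlinarith [ht]


/-- for `a ∈ A_ST` satisfying A2 and fixed `A > 1`, there is `K` such that
for all `y ≥ 2`, `∑_{p ≥ y, |a_p| < (log₂ p)^{-A}} 1/p ≤ K (log₂ y)^{-(A-1)}` (stated via
all finite partial sums of this sum over primes). -/
theorem sum_recip_small_ap (a : ℕ → ℝ) (hAST : IsAST a) (hA2 : A2 a)
    (A : ℝ) (hA : 1 < A) :
    ∃ K : ℝ, ∀ y : ℝ, 2 ≤ y → ∀ N : ℕ,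
      ∑ p ∈ (Finset.range N).filter
          (fun p : ℕ => p.Prime ∧ y ≤ (p : ℝ) ∧ |a p| < (log2 (p : ℝ)) ^ (-A)),
        (1 : ℝ) / (p : ℝ)
        ≤ K * (log2 y) ^ (-(A - 1)) := by
  obtain ⟨K₀, hK₀⟩ := hA2 A (by linarith)
  exact sum_recip_small_ap' a hAST.2.1 A hA K₀ hK₀
end

section
/- Let (a_n)_{n≥1} be a sequence in the class A_ST satisfying Assumption A1, let A > 1 be fixed, and let h be the strongly multiplicative function with h(n) = ∏_{p | n, p prime} a_p (so h(p^k) = a_p for all k ≥ 1). Then for any function ψ with ψ(x) → ∞ as x → ∞, there is a constant K such that #{n ∈ N_A(x) : |log|h(n)| − log|a_n|| > K·ψ(x)} = o(x) as x → ∞ (in fact the exceptional set has size O(x/ψ(x)²)). -/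
open Filter Finset MeasureTheory Asymptotics
open scoped Classical

section Aux

/-- Telescoping bound `∑_{d=t}^{M} 1/d² ≤ 1/(t-1)` for `t ≥ 2`. -/
lemma aux_sum_inv_sq (t : ℕ) (ht : 2 ≤ t) (M : ℕ) :
    ∑ d ∈ Finset.Icc t M, (1 : ℝ) / (d : ℝ) ^ 2 ≤ 1 / ((t : ℝ) - 1) := by
  have key : ∀ M : ℕ, ∑ d ∈ Finset.Icc t M, (1 : ℝ) / (d : ℝ) ^ 2 ≤
      1 / ((t : ℝ) - 1) - 1 / ((max M (t - 1) : ℕ) : ℝ) := by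
    intro M
    induction M with
    | zero =>
      have h0 : Finset.Icc t 0 = ∅ := by
        apply Finset.Icc_eq_empty; omega
      have hmax : max 0 (t - 1) = t - 1 := by omega
      have hc : ((t - 1 : ℕ) : ℝ) = (t : ℝ) - 1 := by
        push_cast [Nat.cast_sub (by omega : 1 ≤ t)]; ring
      rw [h0, hmax, hc]; simp
    | succ M ih =>
      by_cases h : t ≤ M + 1
      · rw [Finset.sum_Icc_succ_top h]
        have hmax1 : max (M + 1) (t - 1) = M + 1 := by omega
        have hmax2 : max M (t - 1) = M := by omega
        rw [hmax1]
        rw [hmax2] at ih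
        have hM1 : 1 ≤ M := by omega
        have hMr : (1 : ℝ) ≤ (M : ℝ) := by exact_mod_cast hM1
        have hstep : 1 / ((M : ℝ) + 1) ^ 2 + 1 / ((M : ℝ) + 1) ≤ 1 / (M : ℝ) := by
          rw [div_add_div _ _ (by positivity) (by positivity),
            div_le_div_iff₀ (by positivity) (by positivity)]
          nlinarith
        have hcast : (((M + 1 : ℕ)) : ℝ) = (M : ℝ) + 1 := by push_cast; ring
        rw [hcast]
        linarith
      · have h0 : Finset.Icc t (M + 1) = ∅ := by
          apply Finset.Icc_eq_empty; omega
        have hmax : max (M + 1) (t - 1) = t - 1 := by omega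
        have hc : ((t - 1 : ℕ) : ℝ) = (t : ℝ) - 1 := by
          push_cast [Nat.cast_sub (by omega : 1 ≤ t)]; ring
        rw [h0, hmax, hc]; simp
  refine (key M).trans ?_
  have : 0 ≤ 1 / ((max M (t - 1) : ℕ) : ℝ) := by positivity
  linarith

/-- Counting integers up to `N` having a square divisor `d²` with `d ≥ t`. -/
lemma aux_count_squares (N t : ℕ) (ht : 2 ≤ t) :
    ((((Finset.Icc 1 N).filter (fun n => ∃ d, t ≤ d ∧ d ^ 2 ∣ n)).card : ℝ)) ≤
      (N : ℝ) / ((t : ℝ) - 1) := by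
  classical
  have hsub : (Finset.Icc 1 N).filter (fun n => ∃ d, t ≤ d ∧ d ^ 2 ∣ n) ⊆
      (Finset.Icc t N).biUnion (fun d => (Finset.Icc 1 N).filter (fun n => d ^ 2 ∣ n)) := by
    intro n hn
    simp only [Finset.mem_filter, Finset.mem_Icc] at hn
    obtain ⟨⟨h1, h2⟩, d, hd, hdvd⟩ := hn
    have hd2 : d ^ 2 ≤ n := Nat.le_of_dvd (by omega) hdvd
    have hdd : d ≤ d ^ 2 := Nat.le_self_pow two_ne_zero d
    simp only [Finset.mem_biUnion, Finset.mem_filter, Finset.mem_Icc]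
    exact ⟨d, ⟨hd, by omega⟩, ⟨h1, h2⟩, hdvd⟩
  have hcard := Finset.card_le_card hsub
  have hbi := Finset.card_biUnion_le (s := Finset.Icc t N)
    (t := fun d => (Finset.Icc 1 N).filter (fun n => d ^ 2 ∣ n))
  have hIcc : Finset.Icc 1 N = Finset.Ioc 0 N := rfl
  have hdivcard : ∀ d : ℕ, 0 < d → (((Finset.Icc 1 N).filter (fun n => d ^ 2 ∣ n)).card : ℝ) ≤
      (N : ℝ) * (1 / (d : ℝ) ^ 2) := by
    intro d hd0
    rw [hIcc, Nat.Ioc_filter_dvd_card_eq_div]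
    have := Nat.cast_div_le (α := ℝ) (m := N) (n := d ^ 2)
    calc ((N / d ^ 2 : ℕ) : ℝ) ≤ (N : ℝ) / ((d : ℝ) ^ 2) := by
          refine this.trans ?_
          push_cast
          exact le_rfl
      _ = (N : ℝ) * (1 / (d : ℝ) ^ 2) := by ring
  calc ((((Finset.Icc 1 N).filter (fun n => ∃ d, t ≤ d ∧ d ^ 2 ∣ n)).card : ℝ))
      ≤ (((Finset.Icc t N).biUnion
          (fun d => (Finset.Icc 1 N).filter (fun n => d ^ 2 ∣ n))).card : ℝ) := by
        exact_mod_cast hcard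
    _ ≤ ∑ d ∈ Finset.Icc t N, (((Finset.Icc 1 N).filter (fun n => d ^ 2 ∣ n)).card : ℝ) := by
        exact_mod_cast hbi
    _ ≤ ∑ d ∈ Finset.Icc t N, (N : ℝ) * (1 / (d : ℝ) ^ 2) :=
        Finset.sum_le_sum fun d hd => hdivcard d
          (by simp only [Finset.mem_Icc] at hd; omega)
    _ = (N : ℝ) * ∑ d ∈ Finset.Icc t N, (1 : ℝ) / (d : ℝ) ^ 2 := by rw [Finset.mul_sum]
    _ ≤ (N : ℝ) * (1 / ((t : ℝ) - 1)) := by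
        refine mul_le_mul_of_nonneg_left (aux_sum_inv_sq t ht N) (by positivity)
    _ = (N : ℝ) / ((t : ℝ) - 1) := by ring

/-- Upgrade restricted multiplicativity (on positive arguments) to full multiplicativity,
given `a 1 = 1`. -/
lemma aux_mult_all {a : ℕ → ℝ}
    (hm : ∀ m n : ℕ, 0 < m → 0 < n → Nat.Coprime m n → a (m * n) = a m * a n)
    (h1 : a 1 = 1) : ∀ x y : ℕ, Nat.Coprime x y → a (x * y) = a x * a y := by
  intro x y hxy
  rcases Nat.eq_zero_or_pos x with rfl | hx
  · have hy1 : y = 1 := (Nat.coprime_zero_left y).mp hxy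
    subst hy1; simp [h1]
  rcases Nat.eq_zero_or_pos y with rfl | hy
  · have hx1 : x = 1 := (Nat.coprime_zero_right x).mp hxy
    subst hx1; simp [h1]
  exact hm x y hx hy hxy

/-- Factorization formula for `a`. -/
lemma aux_a_factor {a : ℕ → ℝ}
    (hm : ∀ m n : ℕ, 0 < m → 0 < n → Nat.Coprime m n → a (m * n) = a m * a n)
    (h1 : a 1 = 1) {n : ℕ} (hn : n ≠ 0) :
    a n = ∏ p ∈ n.primeFactors, a (p ^ n.factorization p) := by
  rw [Nat.multiplicative_factorization a (aux_mult_all hm h1) h1 hn]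
  rfl

/-- `n` as the product of its prime powers. -/
lemma aux_n_factor {n : ℕ} (hn : n ≠ 0) :
    ∏ p ∈ n.primeFactors, p ^ n.factorization p = n := by
  conv_rhs => rw [← Nat.factorization_prod_pow_eq_self hn]
  rfl

/-- The per-prime-power bound: for `k ≥ 2`,
`|log|a p| − log|a (p^k)|| ≤ D · (k log p)` with
`D = 2C + 1 + (log 2 + 2|log c₀|)/log 2`. -/
lemma aux_term_bound {a : ℕ → ℝ} {C c₀ ϱ : ℝ} (hC : 0 < C) (hc₀ : 0 < c₀) (hϱ : 0 < ϱ)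
    (hbd2 : ∀ p : ℕ, p.Prime → a p ∈ Set.Icc (-2 : ℝ) 2)
    (hup : ∀ p k : ℕ, p.Prime → 2 ≤ k → |a (p ^ k)| ≤ (p : ℝ) ^ (((k : ℝ) - 1) / 2 - ϱ))
    (hlow : ∀ p k : ℕ, p.Prime → a p ≠ 0 → 1 ≤ k →
      c₀ * (p : ℝ) ^ (-(C * k)) ≤ |a (p ^ k)|)
    {p k : ℕ} (hp : p.Prime) (hk : 2 ≤ k) (hap : a p ≠ 0) :
    abs (Real.log |a p| - Real.log |a (p ^ k)|) ≤
      (2 * C + 1 + (Real.log 2 + 2 * |Real.log c₀|) / Real.log 2) * ((k : ℝ) * Real.log p) := by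
  have hp2 : (2 : ℝ) ≤ (p : ℝ) := by exact_mod_cast hp.two_le
  have hppos : (0 : ℝ) < (p : ℝ) := by linarith
  have hl2 : (0 : ℝ) < Real.log 2 := Real.log_pos one_lt_two
  have hlp : Real.log 2 ≤ Real.log p := Real.log_le_log (by norm_num) hp2
  have hlp0 : (0 : ℝ) < Real.log p := lt_of_lt_of_le hl2 hlp
  have hkr : (2 : ℝ) ≤ (k : ℝ) := by exact_mod_cast hk
  -- lower bounds from A1
  have hlow1 : c₀ * (p : ℝ) ^ (-(C * (1 : ℕ))) ≤ |a p| := by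
    have := hlow p 1 hp hap le_rfl
    rwa [pow_one] at this
  have hlowk := hlow p k hp hap (by omega)
  have hrpos1 : (0 : ℝ) < c₀ * (p : ℝ) ^ (-(C * (1 : ℕ))) :=
    mul_pos hc₀ (Real.rpow_pos_of_pos hppos _)
  have hrposk : (0 : ℝ) < c₀ * (p : ℝ) ^ (-(C * (k : ℕ))) :=
    mul_pos hc₀ (Real.rpow_pos_of_pos hppos _)
  have hap0 : (0 : ℝ) < |a p| := lt_of_lt_of_le hrpos1 hlow1
  have hapk0 : (0 : ℝ) < |a (p ^ k)| := lt_of_lt_of_le hrposk hlowk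
  -- log bounds for a p
  have hupap : |a p| ≤ 2 := (abs_le.mpr ⟨(hbd2 p hp).1, (hbd2 p hp).2⟩)
  have hA_up : Real.log |a p| ≤ Real.log 2 := Real.log_le_log hap0 hupap
  have hA_lo : Real.log c₀ - C * Real.log p ≤ Real.log |a p| := by
    have := Real.log_le_log hrpos1 hlow1
    rwa [Real.log_mul (ne_of_gt hc₀) (ne_of_gt (Real.rpow_pos_of_pos hppos _)),
      Real.log_rpow hppos, Nat.cast_one, mul_one, neg_mul, ← sub_eq_add_neg] at this
  -- log bounds for a (p^k)
  have hupk : |a (p ^ k)| ≤ (p : ℝ) ^ (k : ℝ) := by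
    refine (hup p k hp hk).trans ?_
    refine Real.rpow_le_rpow_of_exponent_le (by linarith) ?_
    linarith
  have hB_up : Real.log |a (p ^ k)| ≤ (k : ℝ) * Real.log p := by
    have := Real.log_le_log hapk0 hupk
    rwa [Real.log_rpow hppos] at this
  have hB_lo : Real.log c₀ - C * ((k : ℝ) * Real.log p) ≤ Real.log |a (p ^ k)| := by
    have := Real.log_le_log hrposk hlowk
    rwa [Real.log_mul (ne_of_gt hc₀) (ne_of_gt (Real.rpow_pos_of_pos hppos _)),
      Real.log_rpow hppos, neg_mul, ← sub_eq_add_neg, mul_assoc] at this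
  -- combine
  have hc' : -|Real.log c₀| ≤ Real.log c₀ := neg_abs_le _
  set E : ℝ := (Real.log 2 + 2 * |Real.log c₀|) / Real.log 2 with hE
  have hEmul : E * Real.log 2 = Real.log 2 + 2 * |Real.log c₀| :=
    div_mul_cancel₀ _ (ne_of_gt hl2)
  have hE0 : 0 ≤ E := by positivity
  have hkL : Real.log 2 ≤ (k : ℝ) * Real.log p := by nlinarith
  have hEkL : Real.log 2 + 2 * |Real.log c₀| ≤ E * ((k : ℝ) * Real.log p) := by
    calc Real.log 2 + 2 * |Real.log c₀| = E * Real.log 2 := hEmul.symm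
      _ ≤ E * ((k : ℝ) * Real.log p) := mul_le_mul_of_nonneg_left hkL hE0
  have habs : |Real.log c₀| ≤ E * ((k : ℝ) * Real.log p) := by
    have := abs_nonneg (Real.log c₀); linarith
  have habs2 : Real.log 2 + |Real.log c₀| ≤ E * ((k : ℝ) * Real.log p) := by
    have := abs_nonneg (Real.log c₀); linarith
  have hCL : C * Real.log p ≤ C * ((k : ℝ) * Real.log p) := by
    have h := mul_nonneg (mul_nonneg hC.le hlp0.le) (by linarith : (0:ℝ) ≤ (k : ℝ) - 1)
    nlinarith [h]
  have hCkL0 : (0 : ℝ) ≤ C * ((k : ℝ) * Real.log p) := by positivity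
  have hkL0 : (0 : ℝ) ≤ (k : ℝ) * Real.log p := by positivity
  have hcup : -Real.log c₀ ≤ |Real.log c₀| := neg_le_abs _
  have hexp : (2 * C + 1 + E) * ((k : ℝ) * Real.log p) =
      2 * (C * ((k : ℝ) * Real.log p)) + (k : ℝ) * Real.log p +
        E * ((k : ℝ) * Real.log p) := by ring
  rw [abs_le]
  constructor
  · have h1 : (Real.log c₀ - C * Real.log p) - (k : ℝ) * Real.log p ≤
        Real.log |a p| - Real.log |a (p ^ k)| := by linarith
    linarith
  · have h1 : Real.log |a p| - Real.log |a (p ^ k)| ≤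
        Real.log 2 - (Real.log c₀ - C * ((k : ℝ) * Real.log p)) := by linarith
    linarith

/-- The squarefull part of `n`. -/
def SqPart (n : ℕ) : ℕ :=
  ∏ p ∈ n.primeFactors.filter (fun p => 2 ≤ n.factorization p), p ^ n.factorization p

lemma aux_SqPart_pos {n : ℕ} : 0 < SqPart n := by
  unfold SqPart
  refine Finset.prod_pos fun p hp => ?_
  exact pow_pos (Nat.mem_primeFactors.mp (Finset.mem_filter.mp hp).1).1.pos _

/-- The key pointwise estimate: the gap between `log |h n|` and `log |a n|` is controlled by
the logarithm of the squarefull part of `n`. -/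
lemma aux_diff_le {a : ℕ → ℝ} {C c₀ ϱ : ℝ} (hC : 0 < C) (hc₀ : 0 < c₀) (hϱ : 0 < ϱ)
    (hm : ∀ m n : ℕ, 0 < m → 0 < n → Nat.Coprime m n → a (m * n) = a m * a n)
    (h1 : a 1 = 1)
    (hbd2 : ∀ p : ℕ, p.Prime → a p ∈ Set.Icc (-2 : ℝ) 2)
    (hup : ∀ p k : ℕ, p.Prime → 2 ≤ k → |a (p ^ k)| ≤ (p : ℝ) ^ (((k : ℝ) - 1) / 2 - ϱ))
    (hlow : ∀ p k : ℕ, p.Prime → a p ≠ 0 → 1 ≤ k →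
      c₀ * (p : ℝ) ^ (-(C * k)) ≤ |a (p ^ k)|)
    {n : ℕ} (hn : n ≠ 0) (han : a n ≠ 0) (hap : ∀ p ∈ n.primeFactors, a p ≠ 0) :
    abs (Real.log |hmul a n| - Real.log |a n|) ≤
      (2 * C + 1 + (Real.log 2 + 2 * |Real.log c₀|) / Real.log 2) *
        Real.log (SqPart n) := by
  classical
  have hfact : a n = ∏ p ∈ n.primeFactors, a (p ^ n.factorization p) := aux_a_factor hm h1 hn
  have hpk0 : ∀ p ∈ n.primeFactors, a (p ^ n.factorization p) ≠ 0 := by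
    intro p hp
    have h := han
    rw [hfact] at h
    exact Finset.prod_ne_zero_iff.mp h p hp
  have hlog_a : Real.log |a n| =
      ∑ p ∈ n.primeFactors, Real.log |a (p ^ n.factorization p)| := by
    rw [hfact, Finset.abs_prod, Real.log_prod]
    intro p hp; exact abs_ne_zero.mpr (hpk0 p hp)
  have hlog_h : Real.log |hmul a n| = ∑ p ∈ n.primeFactors, Real.log |a p| := by
    unfold hmul
    rw [Finset.abs_prod, Real.log_prod]
    intro p hp; exact abs_ne_zero.mpr (hap p hp)
  have hdiff : Real.log |hmul a n| - Real.log |a n| =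
      ∑ p ∈ n.primeFactors.filter (fun p => 2 ≤ n.factorization p),
        (Real.log |a p| - Real.log |a (p ^ n.factorization p)|) := by
    rw [hlog_h, hlog_a, ← Finset.sum_sub_distrib,
      ← Finset.sum_filter_add_sum_filter_not n.primeFactors (fun p => 2 ≤ n.factorization p)
        (fun p => Real.log |a p| - Real.log |a (p ^ n.factorization p)|)]
    have hz : ∑ p ∈ n.primeFactors.filter (fun p => ¬ 2 ≤ n.factorization p),
        (Real.log |a p| - Real.log |a (p ^ n.factorization p)|) = 0 := by
      apply Finset.sum_eq_zero
      intro p hp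
      simp only [Finset.mem_filter] at hp
      obtain ⟨hpf, hk⟩ := hp
      obtain ⟨hpp, hpd, -⟩ := Nat.mem_primeFactors.mp hpf
      have hk1 : 1 ≤ n.factorization p :=
        (Nat.Prime.factorization_pos_of_dvd hpp hn hpd)
      have : n.factorization p = 1 := by omega
      rw [this, pow_one, sub_self]
    rw [hz, add_zero]
  have hlogS : Real.log (SqPart n) =
      ∑ p ∈ n.primeFactors.filter (fun p => 2 ≤ n.factorization p),
        (n.factorization p : ℝ) * Real.log p := by
    unfold SqPart
    rw [Nat.cast_prod]
    rw [Real.log_prod]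
    · refine Finset.sum_congr rfl fun p hp => ?_
      rw [Nat.cast_pow, Real.log_pow]
    · intro p hp
      have hpp : p.Prime := (Nat.mem_primeFactors.mp (Finset.mem_filter.mp hp).1).1
      have : (0:ℝ) < (p:ℝ) ^ n.factorization p := by
        have : (0:ℝ) < (p:ℝ) := by exact_mod_cast hpp.pos
        positivity
      rw [Nat.cast_pow]
      exact ne_of_gt this
  rw [hdiff, hlogS, Finset.mul_sum]
  refine (Finset.abs_sum_le_sum_abs _ _).trans ?_
  refine Finset.sum_le_sum fun p hp => ?_
  simp only [Finset.mem_filter] at hp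
  obtain ⟨hpf, hk⟩ := hp
  have hpp : p.Prime := (Nat.mem_primeFactors.mp hpf).1
  exact aux_term_bound hC hc₀ hϱ hbd2 hup hlow hpp hk (hap p hpf)

end Aux

/-- for `a ∈ A_ST` satisfying A1, fixed `A > 1`, and any `ψ → ∞`, there is a
constant `K` such that the number of `n ∈ N_A(x)` with
`|log |h(n)| - log |a_n|| > K ψ(x)` is `o(x)`, where `h` is the strongly multiplicative
function with `h(p) = a_p`. -/
theorem log_h_approximates_log_a (a : ℕ → ℝ) (hAST : IsAST a) (hA1 : A1 a)
    (A : ℝ) (hA : 1 < A) (ψ : ℝ → ℝ) (hψ : Tendsto ψ atTop atTop) :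
    ∃ K : ℝ, Tendsto (fun x : ℝ =>
      (((NA a A x).filter (fun n : ℕ =>
          K * ψ x < abs (Real.log |hmul a n| - Real.log |a n|))).card : ℝ) / x)
      atTop (nhds 0) := by
  classical
  obtain ⟨hm, hbd2, hst, ϱ, hϱ, hup⟩ := hAST
  obtain ⟨C, hC, c₀, hc₀, hlow⟩ := hA1
  by_cases h1 : a 1 = 1
  swap
  · -- degenerate case: `a 1 = 0`, so `a n = 0` for all `n ≥ 1` and the sets are empty
    refine ⟨1, ?_⟩
    have h0 : a 1 = 0 := by
      have h := hm 1 1 one_pos one_pos (Nat.coprime_one_left 1)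
      rw [one_mul] at h
      have hfac : a 1 * (a 1 - 1) = 0 := by nlinarith
      rcases mul_eq_zero.mp hfac with h' | h'
      · exact h'
      · exact absurd (by linarith) h1
    have hz : ∀ x : ℝ, NA a A x = ∅ := by
      intro x
      rw [Finset.eq_empty_iff_forall_notMem]
      intro n hn
      simp only [NA, NN, Finset.mem_filter, Finset.mem_Icc] at hn
      obtain ⟨⟨⟨hn1, hnN⟩, han⟩, -⟩ := hn
      have han0 : a n = 0 := by
        have h := hm n 1 (by omega) one_pos (Nat.coprime_one_right n)
        rw [mul_one] at h
        rw [h, h0, mul_zero]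
      exact han han0
    have heq : (fun x : ℝ =>
        (((NA a A x).filter (fun n : ℕ =>
          1 * ψ x < abs (Real.log |hmul a n| - Real.log |a n|))).card : ℝ) / x) =
        fun _ : ℝ => (0 : ℝ) := by
      funext x; rw [hz x]; simp
    rw [heq]
    exact tendsto_const_nhds
  · set D : ℝ := 2 * C + 1 + (Real.log 2 + 2 * |Real.log c₀|) / Real.log 2 with hD
    have hl2 : (0 : ℝ) < Real.log 2 := Real.log_pos one_lt_two
    have hDpos : 0 < D := by
      have hnn : 0 ≤ (Real.log 2 + 2 * |Real.log c₀|) / Real.log 2 := by positivity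
      rw [hD]; linarith
    refine ⟨3 * D, ?_⟩
    have hneg : Tendsto (fun x => -ψ x) atTop atBot := tendsto_neg_atBot_iff.mpr hψ
    have hexp0 : Tendsto (fun x => Real.exp (-ψ x)) atTop (nhds 0) :=
      Real.tendsto_exp_atBot.comp hneg
    have hh : Tendsto (fun x => 2 * Real.exp (-ψ x)) atTop (nhds 0) := by
      simpa using hexp0.const_mul (2 : ℝ)
    refine tendsto_of_tendsto_of_tendsto_of_le_of_le' (g := fun _ : ℝ => (0 : ℝ))
      (h := fun x => 2 * Real.exp (-ψ x)) tendsto_const_nhds hh ?_ ?_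
    · filter_upwards [eventually_ge_atTop (1 : ℝ)] with x hx
      have hx0 : (0 : ℝ) ≤ x := by linarith
      exact div_nonneg (Nat.cast_nonneg _) hx0
    · filter_upwards [eventually_ge_atTop (1 : ℝ), hψ.eventually_ge_atTop (1 : ℝ)]
        with x hx hψx
      set N : ℕ := ⌊x⌋₊ with hNdef
      set t : ℕ := ⌊Real.exp (ψ x)⌋₊ + 1 with htdef
      have hexp1 : (2 : ℝ) ≤ Real.exp (ψ x) := by
        have := Real.add_one_le_exp (ψ x)
        linarith
      have ht2 : 2 ≤ t := by
        have h1' : 1 ≤ ⌊Real.exp (ψ x)⌋₊ :=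
          Nat.le_floor (by exact_mod_cast (by linarith : (1 : ℝ) ≤ Real.exp (ψ x)))
        omega
      have hsub : (NA a A x).filter (fun n : ℕ =>
            3 * D * ψ x < abs (Real.log |hmul a n| - Real.log |a n|)) ⊆
          (Finset.Icc 1 N).filter (fun n => ∃ d, t ≤ d ∧ d ^ 2 ∣ n) := by
        intro n hn
        simp only [NA, NN, Finset.mem_filter, Finset.mem_Icc] at hn
        obtain ⟨⟨⟨⟨hn1, hnN⟩, han⟩, hNAp⟩, hdiff⟩ := hn
        have hn0 : n ≠ 0 := by omega
        have hap : ∀ p ∈ n.primeFactors, a p ≠ 0 := by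
          intro p hp
          obtain ⟨hpp, hpd, -⟩ := Nat.mem_primeFactors.mp hp
          have hlog2pos : (0 : ℝ) < log2 x := by
            unfold log2 log1
            exact lt_of_lt_of_le one_pos (le_max_right _ _)
          have hpos : (0 : ℝ) < (log2 x) ^ (-A) := Real.rpow_pos_of_pos hlog2pos _
          exact abs_pos.mp (lt_trans hpos (hNAp p hpp hpd))
        have hdle := aux_diff_le hC hc₀ hϱ hm h1 hbd2 hup hlow hn0 han hap
        rw [← hD] at hdle
        have hS : 3 * ψ x < Real.log (SqPart n) := by
          have hlt : D * (3 * ψ x) < D * Real.log (SqPart n) := by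
            calc D * (3 * ψ x) = 3 * D * ψ x := by ring
              _ < abs (Real.log |hmul a n| - Real.log |a n|) := hdiff
              _ ≤ D * Real.log (SqPart n) := hdle
          exact (mul_lt_mul_iff_right₀ hDpos).mp hlt
        set d : ℕ := ∏ p ∈ n.primeFactors.filter (fun p => 2 ≤ n.factorization p),
            p ^ (n.factorization p / 2) with hddef
        have hd0 : 0 < d := by
          rw [hddef]
          refine Finset.prod_pos fun p hp => ?_
          exact pow_pos (Nat.mem_primeFactors.mp (Finset.mem_filter.mp hp).1).1.pos _
        have hSd3 : SqPart n ≤ d ^ 3 := by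
          rw [hddef, ← Finset.prod_pow]
          unfold SqPart
          refine Finset.prod_le_prod' fun p hp => ?_
          have hpp : p.Prime := (Nat.mem_primeFactors.mp (Finset.mem_filter.mp hp).1).1
          have h2k : 2 ≤ n.factorization p := (Finset.mem_filter.mp hp).2
          calc p ^ n.factorization p ≤ p ^ (n.factorization p / 2 * 3) :=
              Nat.pow_le_pow_right hpp.pos (by omega)
            _ = (p ^ (n.factorization p / 2)) ^ 3 := by rw [← pow_mul]
        have hd2n : d ^ 2 ∣ n := by
          have hdvd1 : d ^ 2 ∣ SqPart n := by
            rw [hddef, ← Finset.prod_pow]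
            unfold SqPart
            refine Finset.prod_dvd_prod_of_dvd _ _ fun p hp => ?_
            have h2k : 2 ≤ n.factorization p := (Finset.mem_filter.mp hp).2
            rw [← pow_mul]
            exact pow_dvd_pow p (by omega : n.factorization p / 2 * 2 ≤ n.factorization p)
          have hdvd2 : SqPart n ∣ n := by
            have hstep : SqPart n ∣ ∏ p ∈ n.primeFactors, p ^ n.factorization p := by
              unfold SqPart
              exact Finset.prod_dvd_prod_of_subset _ _ _ (Finset.filter_subset _ _)
            rw [aux_n_factor hn0] at hstep
            exact hstep
          exact hdvd1.trans hdvd2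
        have hlogSd : Real.log (SqPart n) ≤ 3 * Real.log d := by
          have hcast : ((SqPart n : ℕ) : ℝ) ≤ ((d : ℝ)) ^ 3 := by exact_mod_cast hSd3
          have hlog := Real.log_le_log (by exact_mod_cast aux_SqPart_pos (n := n)) hcast
          rwa [Real.log_pow, Nat.cast_ofNat] at hlog
        have hlogd : ψ x < Real.log d := by linarith
        have hdgt : Real.exp (ψ x) < (d : ℝ) := by
          have := Real.exp_lt_exp.mpr hlogd
          rwa [Real.exp_log (by exact_mod_cast hd0)] at this
        have htd : t ≤ d := by
          have hfl : ⌊Real.exp (ψ x)⌋₊ < d := (Nat.floor_lt (Real.exp_pos _).le).mpr hdgt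
          omega
        simp only [Finset.mem_filter, Finset.mem_Icc]
        exact ⟨⟨hn1, hnN⟩, d, htd, hd2n⟩
      have hcard : ((((NA a A x).filter (fun n : ℕ =>
            3 * D * ψ x < abs (Real.log |hmul a n| - Real.log |a n|))).card : ℝ)) ≤
          (N : ℝ) / ((t : ℝ) - 1) :=
        le_trans (by exact_mod_cast Finset.card_le_card hsub) (aux_count_squares N t ht2)
      have hN : (N : ℝ) ≤ x := Nat.floor_le (by linarith)
      have htfl : Real.exp (ψ x) - 1 < (t : ℝ) - 1 := by
        have hfl := Nat.sub_one_lt_floor (Real.exp (ψ x))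
        have hc : (t : ℝ) - 1 = (⌊Real.exp (ψ x)⌋₊ : ℝ) := by
          rw [htdef]; push_cast; ring
        linarith
      have hhalf : Real.exp (ψ x) / 2 ≤ (t : ℝ) - 1 := by linarith
      have hfinal : (N : ℝ) / ((t : ℝ) - 1) ≤ 2 * Real.exp (-ψ x) * x := by
        rw [Real.exp_neg]
        calc (N : ℝ) / ((t : ℝ) - 1) ≤ x / (Real.exp (ψ x) / 2) := by
              apply div_le_div₀ (by linarith) hN (by positivity) hhalf
          _ = 2 * (Real.exp (ψ x))⁻¹ * x := by
              rw [div_div_eq_mul_div, div_eq_mul_inv]; ring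
      rw [div_le_iff₀ (by linarith : (0 : ℝ) < x)]
      exact hcard.trans hfinal
end
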